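/- (Gelfand–Yaglom–Perez theorem for Rényi relative entropy, main inequality) Let P and R be probability measures with P ≪ R, φ = dP/dR, and α > 1. Then ∫_X φ^α dR equals the supremum, over all finite measurable partitions {E_1,...,E_m} of X, of Σ_{k=1}^m P(E_k)^α / R(E_k)^(α-1). -/

import Mathlib

/-!
Splitting the integral along a partition, Jensen's (Hölder's) inequality on each cell `E`
gives `P E ^ α / R E ^ (α - 1) ≤ ∫⁻ x in E, φ x ^ α ∂R`, so every partition sum is at most
the integral. Conversely, if a simple function `s ≤ φ` takes the value `y` on `E`, then
`y * R E ≤ P E`, so `∫⁻ s ^ α ∂R` is at most the partition sum over the level sets of `s`;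
approximating `φ` from below by simple functions gives the reverse inequality.
-/

open MeasureTheory ENNReal Filter

/-- A finite measurable partition of `X`. -/
structure FinPartition (X : Type*) [MeasurableSpace X] where
  m : ℕ
  E : Fin m → Set X
  meas : ∀ k, MeasurableSet (E k)
  disj : Pairwise (Function.onFun Disjoint E)
  cover : ⋃ k, E k = Set.univ

namespace FinPartition

variable {X : Type*} [MeasurableSpace X]

theorem sum_setLIntegral (π : FinPartition X) (μ : Measure X) (f : X → ℝ≥0∞) :
    ∑ k, ∫⁻ x in π.E k, f x ∂μ = ∫⁻ x, f x ∂μ := by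
  rw [← tsum_fintype (L := SummationFilter.unconditional _), ← lintegral_iUnion π.meas π.disj,
    π.cover, Measure.restrict_univ]

noncomputable def ofSimpleFunc {β : Type*} (s : SimpleFunc X β) : FinPartition X where
  m := s.range.card
  E k := s ⁻¹' {(s.range.equivFin.symm k : β)}
  meas _ := s.measurableSet_fiber _
  disj k l hkl := by
    refine Set.disjoint_left.2 fun x hxk hxl => hkl ?_
    exact s.range.equivFin.symm.injective (Subtype.ext (hxk.symm.trans hxl))
  cover := Set.eq_univ_of_forall fun x =>
    Set.mem_iUnion.2 ⟨s.range.equivFin ⟨s x, s.mem_range_self x⟩, by simp⟩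

theorem sum_ofSimpleFunc {β M : Type*} [AddCommMonoid M] (s : SimpleFunc X β) (g : Set X → M) :
    ∑ k, g ((ofSimpleFunc s).E k) = ∑ y ∈ s.range, g (s ⁻¹' {y}) := by
  rw [← Finset.sum_coe_sort s.range (fun y => g (s ⁻¹' {y})),
    ← Equiv.sum_comp s.range.equivFin.symm]
  rfl

end FinPartition

namespace ENNReal

theorem iSup_rpow {ι : Type*} (f : ι → ℝ≥0∞) {p : ℝ} (hp : 0 < p) :
    (⨆ i, f i) ^ p = ⨆ i, f i ^ p :=
  (orderIsoRpow p hp).map_iSup f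

theorem rpow_mul_le_rpow_div_rpow {a b c : ℝ≥0∞} {p : ℝ} (hp : 0 ≤ p) (hc : c ≠ ⊤)
    (h : a * c ≤ b) : a ^ p * c ≤ b ^ p / c ^ (p - 1) := by
  rcases eq_or_ne c 0 with rfl | hc0
  · simp
  calc a ^ p * c = a ^ p * (c ^ p / c ^ (p - 1)) := by
        rw [← rpow_sub _ _ hc0 hc, _root_.sub_sub_cancel, rpow_one]
    _ = (a * c) ^ p / c ^ (p - 1) := by rw [mul_rpow_of_nonneg _ _ hp, mul_div_assoc]
    _ ≤ b ^ p / c ^ (p - 1) := by gcongr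

end ENNReal

section LintegralRpow

variable {X : Type*} [MeasurableSpace X]

theorem lintegral_rpow_div_measure_univ_rpow_le {μ : Measure X} {f : X → ℝ≥0∞}
    (hf : AEMeasurable f μ) {p : ℝ} (hp : 1 < p) :
    (∫⁻ x, f x ∂μ) ^ p / μ Set.univ ^ (p - 1) ≤ ∫⁻ x, f x ^ p ∂μ := by
  have hp0 : 0 < p := one_pos.trans hp
  have hpq : p.HolderConjugate (p / (p - 1)) := Real.HolderConjugate.conjExponent hp
  have holder := ENNReal.lintegral_mul_le_Lp_mul_Lq μ hpq hf (aemeasurable_const (b := 1))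
  simp only [Pi.mul_apply, mul_one, one_rpow, lintegral_const, one_mul] at holder
  refine div_le_of_le_mul ?_
  calc (∫⁻ x, f x ∂μ) ^ p
      ≤ ((∫⁻ x, f x ^ p ∂μ) ^ (1 / p) * μ Set.univ ^ (1 / (p / (p - 1)))) ^ p := by gcongr
    _ = (∫⁻ x, f x ^ p ∂μ) * μ Set.univ ^ (p - 1) := by
      rw [mul_rpow_of_nonneg _ _ hp0.le, ← rpow_mul, ← rpow_mul, one_div_mul_cancel hp0.ne',
        rpow_one]
      congr 2
      field_simp

theorem lintegral_rpow_eq_iSup_eapprox {μ : Measure X} {f : X → ℝ≥0∞} (hf : Measurable f)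
    {p : ℝ} (hp : 0 < p) :
    ∫⁻ x, f x ^ p ∂μ = ⨆ n, ∫⁻ x, SimpleFunc.eapprox f n x ^ p ∂μ := by
  rw [← lintegral_iSup (fun n => (SimpleFunc.eapprox f n).measurable.pow_const p)
    fun n m hnm x => rpow_le_rpow (SimpleFunc.monotone_eapprox f hnm x) hp.le]
  simp_rw [← ENNReal.iSup_rpow _ hp, SimpleFunc.iSup_eapprox_apply hf]

end LintegralRpow

section RenyiPartition

variable {X : Type*} [MeasurableSpace X] {α : ℝ}

theorem FinPartition.sum_le_lintegral_rnDeriv_rpow {P R : Measure X}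
    [P.HaveLebesgueDecomposition R] [SFinite R] (h : P ≪ R) (hα : 1 < α) (π : FinPartition X) :
    ∑ k, P (π.E k) ^ α / R (π.E k) ^ (α - 1) ≤ ∫⁻ x, P.rnDeriv R x ^ α ∂ R :=
  calc ∑ k, P (π.E k) ^ α / R (π.E k) ^ (α - 1)
      = ∑ k, (∫⁻ x in π.E k, P.rnDeriv R x ∂ R) ^ α
          / (R.restrict (π.E k)) Set.univ ^ (α - 1) := by
        simp only [Measure.setLIntegral_rnDeriv h, Measure.restrict_apply_univ]
    _ ≤ ∑ k, ∫⁻ x in π.E k, P.rnDeriv R x ^ α ∂ R := Finset.sum_le_sum fun k _ =>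
        lintegral_rpow_div_measure_univ_rpow_le (Measure.measurable_rnDeriv P R).aemeasurable hα
    _ = ∫⁻ x, P.rnDeriv R x ^ α ∂ R := π.sum_setLIntegral R _

theorem lintegral_simpleFunc_rpow_le_sum_levelSets (P : Measure X) {R : Measure X}
    [IsFiniteMeasure R] (hα : 0 ≤ α) (s : SimpleFunc X ℝ≥0∞)
    (hs : ∀ x, s x ≤ P.rnDeriv R x) :
    ∫⁻ x, s x ^ α ∂ R
      ≤ ∑ y ∈ s.range, P (s ⁻¹' {y}) ^ α / R (s ⁻¹' {y}) ^ (α - 1) := by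
  change ∫⁻ x, s.map (· ^ α) x ∂ R ≤ _
  rw [SimpleFunc.lintegral_eq_lintegral, SimpleFunc.map_lintegral]
  refine Finset.sum_le_sum fun y _ => rpow_mul_le_rpow_div_rpow hα (measure_ne_top R _) ?_
  calc y * R (s ⁻¹' {y}) = ∫⁻ x in s ⁻¹' {y}, y ∂ R := (setLIntegral_const _ y).symm
    _ ≤ ∫⁻ x in s ⁻¹' {y}, P.rnDeriv R x ∂ R :=
        setLIntegral_mono (Measure.measurable_rnDeriv P R) fun x hx => hx ▸ hs x
    _ ≤ P (s ⁻¹' {y}) := Measure.setLIntegral_rnDeriv_le _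

theorem lintegral_rnDeriv_rpow_le_iSup_partition (P : Measure X) {R : Measure X}
    [IsFiniteMeasure R] (hα : 0 < α) :
    ∫⁻ x, P.rnDeriv R x ^ α ∂ R
      ≤ ⨆ π : FinPartition X, ∑ k, P (π.E k) ^ α / R (π.E k) ^ (α - 1) := by
  have hφ := Measure.measurable_rnDeriv P R
  rw [lintegral_rpow_eq_iSup_eapprox hφ hα]
  refine iSup_le fun n => ?_
  let s := SimpleFunc.eapprox (P.rnDeriv R) n
  have hs : ∀ x, s x ≤ P.rnDeriv R x := fun x =>
    SimpleFunc.iSup_eapprox_apply hφ x ▸ le_iSup_of_le n le_rfl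
  refine le_iSup_of_le (FinPartition.ofSimpleFunc s) ?_
  rw [FinPartition.sum_ofSimpleFunc s fun E => P E ^ α / R E ^ (α - 1)]
  exact lintegral_simpleFunc_rpow_le_sum_levelSets P hα.le s hs

end RenyiPartition

theorem gyp_renyi_integral {X : Type*} [MeasurableSpace X]
    (P R : Measure X) [IsProbabilityMeasure P] [IsProbabilityMeasure R]
    (h : P ≪ R) (α : ℝ) (hα : 1 < α) :
    ∫⁻ x, P.rnDeriv R x ^ α ∂ R
      = ⨆ π : FinPartition X, ∑ k, P (π.E k) ^ α / R (π.E k) ^ (α - 1) :=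
  le_antisymm (lintegral_rnDeriv_rpow_le_iSup_partition P (one_pos.trans hα))
    (iSup_le (FinPartition.sum_le_lintegral_rnDeriv_rpow h hα))
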